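/- arXiv:math/0011219 — 2 statements merged into one kernel-verified Lean document; each statement's English description precedes it below -/
import Mathlib

section
/- In the setting of the base change lemma, with π^* B_i = Σ_{i'} m_{ii'} B'_{i'} and s a local section of R^q f_* ω_{Y/X} from the adapted basis: for every i' and every real t'_{i'}, the minimum over t = (t_1,…,t_h) of Σ_i ⌊t_i + ord_i(s)⌋ m_{ii'} + ⌊t'_{i'} + Σ_i (1 − t_i) m_{ii'}⌋ equals ⌊t'_{i'} + Σ_i ord_i(s) m_{ii'}⌋, and this minimum is attained at t_i = 1 − ord_i(s) − ε_i for sufficiently small ε_i > 0, a choice independent of i'. -/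
open scoped BigOperators

/-- the key combinatorial computation in the proof of the
base change formula for parabolic structures, Lemma 4.1 (2).  Here `ι`
indexes the branches `B_i` of `B`, `ι'` indexes the branches `B'_{i'}` of
`B' = (π^* B)_red`, `m i' i` is the multiplicity `m_{ii'}` in
`π^* B_i = Σ_{i'} m_{ii'} B'_{i'}`, `a i = ord_i(s) ∈ [0,1)` is the order of
growth of the adapted basis section `s` along `B_i`, and `t' i'` is a real
parameter for each `i'`.  The claim: for every `i'`, the minimum over
`t = (t_1,…,t_h)` of
`Σ_i ⌊t_i + ord_i(s)⌋ m_{ii'} + ⌊t'_{i'} + Σ_i (1 - t_i) m_{ii'}⌋`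
equals `⌊t'_{i'} + Σ_i ord_i(s) m_{ii'}⌋`, and this minimum is attained at
`t_i = 1 - ord_i(s) - ε_i` for all sufficiently small `ε_i > 0`, a choice
which is independent of `i'`. -/
theorem statement12 (ι ι' : Type) [Fintype ι] [Fintype ι']
    (m : ι' → ι → ℕ) (a : ι → ℝ) (ha : ∀ i, 0 ≤ a i ∧ a i < 1)
    (t' : ι' → ℝ) :
    (∀ i' : ι', IsLeast
        {v : ℤ | ∃ t : ι → ℝ,
          v = (∑ i, ⌊t i + a i⌋ * (m i' i : ℤ))
              + ⌊t' i' + ∑ i, (1 - t i) * (m i' i : ℝ)⌋}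
        ⌊t' i' + ∑ i, a i * (m i' i : ℝ)⌋) ∧
    (∃ ε₀ : ℝ, 0 < ε₀ ∧ ∀ ε : ι → ℝ, (∀ i, 0 < ε i ∧ ε i < ε₀) →
      ∀ i' : ι',
        (∑ i, ⌊(1 - a i - ε i) + a i⌋ * (m i' i : ℤ))
            + ⌊t' i' + ∑ i, (1 - (1 - a i - ε i)) * (m i' i : ℝ)⌋
          = ⌊t' i' + ∑ i, a i * (m i' i : ℝ)⌋) := by
  classical
  -- the attainment part, with ε₀ additionally ≤ 1
  have key : ∃ ε₀ : ℝ, 0 < ε₀ ∧ ε₀ ≤ 1 ∧ ∀ ε : ι → ℝ, (∀ i, 0 < ε i ∧ ε i < ε₀) →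
      ∀ i' : ι',
        (∑ i, ⌊(1 - a i - ε i) + a i⌋ * (m i' i : ℤ))
            + ⌊t' i' + ∑ i, (1 - (1 - a i - ε i)) * (m i' i : ℝ)⌋
          = ⌊t' i' + ∑ i, a i * (m i' i : ℝ)⌋ := by
    set δ : ι' → ℝ := fun i' =>
      ((⌊t' i' + ∑ i, a i * (m i' i : ℝ)⌋ : ℝ) + 1
        - (t' i' + ∑ i, a i * (m i' i : ℝ))) / ((∑ i, (m i' i : ℝ)) + 1) with hδdef
    have hmsum : ∀ i', (0:ℝ) ≤ ∑ i, (m i' i : ℝ) := fun i' =>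
      Finset.sum_nonneg (fun i _ => by positivity)
    have hδpos : ∀ i', 0 < δ i' := by
      intro i'
      apply div_pos
      · have := Int.lt_floor_add_one (t' i' + ∑ i, a i * (m i' i : ℝ)); linarith
      · linarith [hmsum i']
    obtain ⟨ε₀, hε₀pos, hε₀le1, hε₀δ⟩ :
        ∃ ε₀ : ℝ, 0 < ε₀ ∧ ε₀ ≤ 1 ∧ ∀ i', ε₀ ≤ δ i' := by
      rcases isEmpty_or_nonempty ι' with h | h
      · exact ⟨1, one_pos, le_refl 1, fun i' => (h.false i').elim⟩
      · refine ⟨min 1 (Finset.univ.inf' Finset.univ_nonempty δ), ?_,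
          min_le_left _ _, ?_⟩
        · exact lt_min one_pos ((Finset.lt_inf'_iff _).mpr (fun i' _ => hδpos i'))
        · intro i'
          exact (min_le_right _ _).trans (Finset.inf'_le _ (Finset.mem_univ i'))
    refine ⟨ε₀, hε₀pos, hε₀le1, ?_⟩
    intro ε hε i'
    have h1 : ∀ i, ⌊(1 - a i - ε i) + a i⌋ = 0 := by
      intro i
      rw [Int.floor_eq_zero_iff]
      constructor
      · have := (hε i).2; linarith
      · have := (hε i).1; linarith
    have hsum0 : (∑ i, ⌊(1 - a i - ε i) + a i⌋ * (m i' i : ℤ)) = 0 := by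
      simp [h1]
    rw [hsum0, zero_add]
    have hrw : (∑ i, (1 - (1 - a i - ε i)) * (m i' i : ℝ))
        = (∑ i, a i * (m i' i : ℝ)) + ∑ i, ε i * (m i' i : ℝ) := by
      rw [← Finset.sum_add_distrib]
      exact Finset.sum_congr rfl (fun i _ => by ring)
    rw [hrw]
    set S := ∑ i, ε i * (m i' i : ℝ) with hSdef
    have hS0 : 0 ≤ S :=
      Finset.sum_nonneg (fun i _ => mul_nonneg (hε i).1.le (by positivity))
    have hSle : S ≤ ε₀ * ∑ i, (m i' i : ℝ) := by
      rw [Finset.mul_sum]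
      exact Finset.sum_le_sum (fun i _ =>
        mul_le_mul_of_nonneg_right (hε i).2.le (by positivity))
    have hnum : ε₀ * ((∑ i, (m i' i : ℝ)) + 1)
        ≤ (⌊t' i' + ∑ i, a i * (m i' i : ℝ)⌋ : ℝ) + 1
          - (t' i' + ∑ i, a i * (m i' i : ℝ)) := by
      have h := hε₀δ i'
      rw [hδdef] at h
      have hpos : (0:ℝ) < (∑ i, (m i' i : ℝ)) + 1 := by linarith [hmsum i']
      exact (le_div_iff₀ hpos).mp h
    have hSlt : S < (⌊t' i' + ∑ i, a i * (m i' i : ℝ)⌋ : ℝ) + 1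
        - (t' i' + ∑ i, a i * (m i' i : ℝ)) := by nlinarith
    rw [Int.floor_eq_iff]
    constructor
    · have := Int.floor_le (t' i' + ∑ i, a i * (m i' i : ℝ))
      push_cast
      linarith
    · push_cast
      linarith
  obtain ⟨ε₀, hε₀pos, hε₀le1, hkey⟩ := key
  constructor
  · intro i'
    constructor
    · -- membership: take t i = 1 - a i - ε₀/2
      refine ⟨fun i => 1 - a i - ε₀ / 2, ?_⟩
      have := hkey (fun _ => ε₀ / 2) (fun i => ⟨by linarith, by linarith⟩) i'
      exact this.symm
    · -- lower bound
      rintro v ⟨t, rfl⟩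
      have hreal : t' i' + ∑ i, a i * (m i' i : ℝ)
          ≤ t' i' + ∑ i, (1 - t i) * (m i' i : ℝ)
            + ((∑ i, ⌊t i + a i⌋ * (m i' i : ℤ) : ℤ) : ℝ) := by
        push_cast
        have : ∀ i ∈ Finset.univ, a i * (m i' i : ℝ)
            ≤ (1 - t i) * (m i' i : ℝ) + (⌊t i + a i⌋ : ℝ) * (m i' i : ℝ) := by
          intro i _
          have h1 : a i ≤ (1 - t i) + (⌊t i + a i⌋ : ℝ) := by
            have := Int.lt_floor_add_one (t i + a i)
            linarith
          nlinarith [Nat.cast_nonneg (α := ℝ) (m i' i)]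
        have hs := Finset.sum_le_sum this
        rw [Finset.sum_add_distrib] at hs
        linarith
      have := Int.floor_le_floor hreal
      rw [Int.floor_add_intCast] at this
      omega
  · exact ⟨ε₀, hε₀pos, hkey⟩
end

section
/- In the proof of the relative vanishing theorem: let π: X' → X be a finite surjective Galois morphism of smooth projective varieties, étale over X \ B for a normal crossing divisor B = Σ_i B_i with B' = π^{-1}(B) normal crossing, and let L be a ℚ-divisor on X with fractional part supported on B such that π^* L has integral coefficients. Fix t = (t_1,…,t_h) and let A be the largest divisor on X such that π^* A ≤ ⌈−Σ_{i'} B'_{i'} − Σ_i (1 − t_i) π^* B_i⌉ + π^*(B + L). Then A = ⌈L − Σ_i (1 − t_i) B_i⌉. -/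
/-!
Since `π^* L` is integral, the inequality defining `A` along `B'_{i'}` compares an integer
with `⌈-1 - s⌉`, where `s = Σ_i (1 - t_i) m_{ii'}`, so it is equivalent to the strict inequality
`Σ_i a_i m_{ii'} < Σ_i (l_i - (1 - t_i) + 1) m_{ii'}`. The coefficients `⌈l_i - (1 - t_i)⌉`
satisfy it termwise, strictly at any `B_i` under `B'_{i'}`; conversely, testing it at a
component of `B'` lying over `B_i` alone gives `a_i < l_i - (1 - t_i) + 1`.
-/

section

variable {ι R : Type*} [Fintype ι] [Field R] [LinearOrder R] [IsStrictOrderedRing R] [FloorRing R]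

theorem sum_mul_le_ceil_add_iff_lt (w : ι → ℕ) (l u : ι → R)
    (hl : ∃ z : ℤ, ∑ i, l i * w i = z) (a : ι → ℤ) :
    ∑ i, (a i : R) * w i ≤
        (⌈-1 - ∑ i, u i * w i⌉ : R) + ∑ i, (w i : R) + ∑ i, l i * w i ↔
      ∑ i, (a i : R) * w i < ∑ i, (l i - u i + 1) * w i := by
  obtain ⟨z, hz⟩ := hl
  have hexpand :
      ∑ i, (l i - u i + 1) * w i = ∑ i, l i * w i - ∑ i, u i * w i + ∑ i, (w i : R) := by
    simp only [add_mul, sub_mul, one_mul, Finset.sum_add_distrib, Finset.sum_sub_distrib]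
  set N : ℤ := ∑ i, a i * w i - ∑ i, (w i : ℤ) - z
  have hNcast : (N : R) = ∑ i, (a i : R) * w i - ∑ i, (w i : R) - z := by
    push_cast [N]; ring
  calc _ ↔ (N : R) ≤ ⌈-1 - ∑ i, u i * w i⌉ := by
        rw [hNcast, hz]; constructor <;> intro h <;> linarith
    _ ↔ N - 1 < -1 - ∑ i, u i * w i := by rw [Int.cast_le, Int.le_ceil_iff]
    _ ↔ _ := by rw [hexpand, hz]; push_cast [hNcast]; constructor <;> intro h <;> linarith

theorem isGreatest_ceil_of_weighted_sum_lt {ι' : Type*} (m : ι → ι' → ℕ)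
    (hcover : ∀ i', ∃ i, 0 < m i i')
    (hgeneric : ∀ i, ∃ i', 0 < m i i' ∧ ∀ j, j ≠ i → m j i' = 0) (x : ι → R) :
    IsGreatest {a : ι → ℤ | ∀ i', ∑ i, (a i : R) * m i i' < ∑ i, (x i + 1) * m i i'}
      (fun i => ⌈x i⌉) := by
  constructor
  · intro i'
    obtain ⟨i₀, hi₀⟩ := hcover i'
    refine Finset.sum_lt_sum (fun i _ => ?_) ⟨i₀, Finset.mem_univ _, ?_⟩
    · exact mul_le_mul_of_nonneg_right (Int.ceil_lt_add_one _).le (Nat.cast_nonneg _)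
    · exact mul_lt_mul_of_pos_right (Int.ceil_lt_add_one _) (Nat.cast_pos.mpr hi₀)
  · intro a ha i
    obtain ⟨i', hpos, hzero⟩ := hgeneric i
    have hsingle (f : ι → R) : ∑ j, f j * m j i' = f i * m i i' :=
      Finset.sum_eq_single i (fun j _ hj => by simp [hzero j hj]) (by simp)
    have hlt := ha i'
    rw [hsingle (fun j => (a j : R)), hsingle (fun j => x j + 1)] at hlt
    rw [Int.le_ceil_iff, sub_lt_iff_lt_add]
    exact lt_of_mul_lt_mul_right hlt (Nat.cast_nonneg _)

end

/-- `m i i'` is the multiplicity of `B'_{i'}` in `π^* B_i` and `l i` the coefficient of `L`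
along `B_i`; a divisor on `X` is recorded by its coefficients `a i` along the `B_i`. -/
theorem statement15 (ι ι' : Type) [Fintype ι] [Fintype ι']
    (m : ι → ι' → ℕ)
    (hcover : ∀ i' : ι', ∃ i : ι, 0 < m i i')
    (hgeneric : ∀ i : ι, ∃ i' : ι', 0 < m i i' ∧ ∀ j : ι, j ≠ i → m j i' = 0)
    (l : ι → ℚ) (t : ι → ℝ)
    (hintegral : ∀ i' : ι', ∃ z : ℤ, (∑ i, (l i : ℝ) * (m i i' : ℝ)) = (z : ℝ)) :
    IsGreatest
      {a : ι → ℤ | ∀ i' : ι',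
        (∑ i, (a i : ℝ) * (m i i' : ℝ)) ≤
          (⌈(-1 : ℝ) - ∑ i, (1 - t i) * (m i i' : ℝ)⌉ : ℝ)
            + (∑ i, (m i i' : ℝ)) + ∑ i, (l i : ℝ) * (m i i' : ℝ)}
      (fun i => ⌈(l i : ℝ) - (1 - t i)⌉) := by
  convert isGreatest_ceil_of_weighted_sum_lt m hcover hgeneric (fun i => (l i : ℝ) - (1 - t i))
    using 1
  ext a
  exact forall_congr' fun i' =>
    sum_mul_le_ceil_add_iff_lt (m · i') (fun i => (l i : ℝ)) (1 - t ·) (hintegral i') a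
end
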